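/- Let d ≥ 2. If a margin-based loss φ : ℝ → [0,∞) is convex, then φ is not H_lin-calibrated with respect to the adversarial 0/1 loss ℓ_γ. -/

import Mathlib

open scoped RealInnerProductSpace

noncomputable section

/-- A loss assigns a value to a predictor `f`, a point `x`, and a label `y` (±1). -/
abbrev Loss (d : ℕ) := ((EuclideanSpace ℝ (Fin d)) → ℝ) → (EuclideanSpace ℝ (Fin d)) → ℝ → ℝ

variable {d : ℕ}

/-- The inner (conditional) ℓ-risk. -/
def innerRisk (ℓ : Loss d) (f : EuclideanSpace ℝ (Fin d) → ℝ)
    (x : EuclideanSpace ℝ (Fin d)) (η : ℝ) : ℝ :=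
  η * ℓ f x 1 + (1 - η) * ℓ f x (-1)

/-- The minimal inner ℓ-risk over a hypothesis set `H`. -/
def minInnerRisk (ℓ : Loss d) (H : Set (EuclideanSpace ℝ (Fin d) → ℝ))
    (x : EuclideanSpace ℝ (Fin d)) (η : ℝ) : ℝ :=
  ⨅ f : H, innerRisk ℓ f x η

/-- ℓ₁ is H-calibrated with respect to ℓ₂. -/
def Calibrated (H : Set (EuclideanSpace ℝ (Fin d) → ℝ)) (ℓ₁ ℓ₂ : Loss d) : Prop :=
  ∀ ε > (0:ℝ), ∀ η ∈ Set.Icc (0:ℝ) 1, ∀ x : EuclideanSpace ℝ (Fin d), ‖x‖ ≤ 1 →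
    ∃ δ > (0:ℝ), ∀ f ∈ H,
      innerRisk ℓ₁ f x η < minInnerRisk ℓ₁ H x η + δ →
      innerRisk ℓ₂ f x η < minInnerRisk ℓ₂ H x η + ε

/-- The adversarial 0/1 loss with perturbation radius γ. -/
def advLoss (γ : ℝ) : Loss d := fun f x y =>
  ⨆ x' : Metric.closedBall x γ, (if y * f ↑x' ≤ 0 then (1:ℝ) else 0)

/-- A margin-based loss viewed as a loss. -/
def marginLoss (φ : ℝ → ℝ) : Loss d := fun f x y => φ (y * f x)

/-- The supremum-based surrogate of a margin-based loss. -/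
def supLoss (γ : ℝ) (φ : ℝ → ℝ) : Loss d := fun f x y =>
  ⨆ x' : Metric.closedBall x γ, φ (y * f ↑x')

/-- Infimum of f over the closed γ-ball around x. -/
def infBall (γ : ℝ) (f : EuclideanSpace ℝ (Fin d) → ℝ) (x : EuclideanSpace ℝ (Fin d)) : ℝ :=
  ⨅ x' : Metric.closedBall x γ, f ↑x'

/-- Supremum of f over the closed γ-ball around x. -/
def supBall (γ : ℝ) (f : EuclideanSpace ℝ (Fin d) → ℝ) (x : EuclideanSpace ℝ (Fin d)) : ℝ :=
  ⨆ x' : Metric.closedBall x γ, f ↑x'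

/-- x is a distinguishing point for H. -/
def Distinguishing (γ : ℝ) (H : Set (EuclideanSpace ℝ (Fin d) → ℝ))
    (x : EuclideanSpace ℝ (Fin d)) : Prop :=
  ‖x‖ ≤ 1 ∧ (∃ f ∈ H, 0 < infBall γ f x) ∧ (∃ g ∈ H, supBall γ g x < 0)

/-- H is regular for adversarial calibration. -/
def RegularAdv (γ : ℝ) (H : Set (EuclideanSpace ℝ (Fin d) → ℝ)) : Prop :=
  ∃ x, Distinguishing γ H x

/-- H is symmetric. -/
def SymmetricH (H : Set (EuclideanSpace ℝ (Fin d) → ℝ)) : Prop :=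
  ∀ f ∈ H, -f ∈ H

/-- Linear hypothesis set. -/
def Hlin (d : ℕ) : Set (EuclideanSpace ℝ (Fin d) → ℝ) :=
  { f | ∃ w : EuclideanSpace ℝ (Fin d), ‖w‖ = 1 ∧ f = fun x => (inner ℝ w x : ℝ) }

/-- Generalized linear hypothesis set. -/
def Hg (d : ℕ) (g : ℝ → ℝ) (G : ℝ) : Set (EuclideanSpace ℝ (Fin d) → ℝ) :=
  { f | ∃ (w : EuclideanSpace ℝ (Fin d)) (b : ℝ), ‖w‖ = 1 ∧ |b| ≤ G ∧
      f = fun x => g (inner ℝ w x : ℝ) + b }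

/-- ReLU-based hypothesis set. -/
def Hrelu (d : ℕ) (G : ℝ) : Set (EuclideanSpace ℝ (Fin d) → ℝ) :=
  Hg d (fun t => max t 0) G

/-- One-layer ReLU neural network hypothesis set. -/
def Hnn (d n : ℕ) (Λ W : ℝ) : Set (EuclideanSpace ℝ (Fin d) → ℝ) :=
  { f | ∃ (u : Fin n → ℝ) (w : Fin n → EuclideanSpace ℝ (Fin d)),
      (∑ j, |u j|) ≤ Λ ∧ (∀ j, ‖w j‖ ≤ W) ∧
      f = fun x => ∑ j, u j * max (inner ℝ (w j) x : ℝ) 0 }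

/-- All (Borel) measurable functions. -/
def Hall (d : ℕ) : Set (EuclideanSpace ℝ (Fin d) → ℝ) :=
  { f | Measurable f }

/-- The ρ-margin loss. -/
def phiRho (ρ t : ℝ) : ℝ := min 1 (max 0 (1 - t / ρ))

/-
At the point `x = v` (a unit vector) with `η = 1/2`, convexity gives `φ 0 ≤ (φ t + φ (-t)) / 2`,
so the predictor `⟪w, ·⟫` with `w ⟂ v`, which vanishes at `x`, minimizes the inner `φ`-risk.
Its adversarial risk is `1`, since it errs on both labels at `x` itself, whereas `⟪v, ·⟫` stays
at least `1 - γ > 0` on the whole ball and so has adversarial risk at most `1/2`.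
-/

open Metric

lemma exists_orthogonal_unit_vectors {E : Type*} [NormedAddCommGroup E] [InnerProductSpace ℝ E]
    [FiniteDimensional ℝ E] (hE : 2 ≤ Module.finrank ℝ E) :
    ∃ v w : E, ‖v‖ = 1 ∧ ‖w‖ = 1 ∧ ⟪w, v⟫ = 0 := by
  have hb := (stdOrthonormalBasis ℝ E).orthonormal
  refine ⟨_, _, hb.1 ⟨0, by omega⟩, hb.1 ⟨1, by omega⟩, hb.2 ?_⟩
  simp [Fin.ext_iff]

lemma inner_pos_of_mem_closedBall {E : Type*} [NormedAddCommGroup E] [InnerProductSpace ℝ E]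
    {v z : E} {γ : ℝ} (hv : ‖v‖ = 1) (hγ : γ < 1) (hz : z ∈ closedBall v γ) : 0 < ⟪v, z⟫ := by
  have hvz : |⟪v, z - v⟫| ≤ γ := calc
    |⟪v, z - v⟫| ≤ ‖v‖ * ‖z - v‖ := abs_real_inner_le_norm v (z - v)
    _ ≤ γ := by rw [hv, one_mul, ← dist_eq_norm]; exact hz
  have : ⟪v, z⟫ = 1 + ⟪v, z - v⟫ := by
    rw [inner_sub_right, real_inner_self_eq_norm_sq, hv]; ring
  linarith [neg_abs_le ⟪v, z - v⟫]

lemma ConvexOn.map_zero_le_half_add_neg {φ : ℝ → ℝ} (hφ : ConvexOn ℝ Set.univ φ) (t : ℝ) :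
    φ 0 ≤ (φ t + φ (-t)) / 2 := by
  have := hφ.2 (Set.mem_univ t) (Set.mem_univ (-t)) (by norm_num : (0 : ℝ) ≤ 1 / 2)
    (by norm_num : (0 : ℝ) ≤ 1 / 2) (by norm_num)
  simp only [smul_eq_mul] at this
  calc φ 0 = φ (1 / 2 * t + 1 / 2 * -t) := by ring_nf
    _ ≤ 1 / 2 * φ t + 1 / 2 * φ (-t) := this
    _ = (φ t + φ (-t)) / 2 := by ring

lemma innerRisk_half (ℓ : Loss d) (f : EuclideanSpace ℝ (Fin d) → ℝ) (x : EuclideanSpace ℝ (Fin d)) :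
    innerRisk ℓ f x (1 / 2) = (ℓ f x 1 + ℓ f x (-1)) / 2 := by
  rw [innerRisk]; ring

lemma minInnerRisk_le_innerRisk {ℓ : Loss d} {H : Set (EuclideanSpace ℝ (Fin d) → ℝ)}
    {x : EuclideanSpace ℝ (Fin d)} {η : ℝ} {f : EuclideanSpace ℝ (Fin d) → ℝ}
    (hℓ : ∀ g y, 0 ≤ ℓ g x y) (hη : η ∈ Set.Icc (0 : ℝ) 1) (hf : f ∈ H) :
    minInnerRisk ℓ H x η ≤ innerRisk ℓ f x η := by
  refine ciInf_le ⟨0, ?_⟩ (⟨f, hf⟩ : H)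
  rintro _ ⟨g, rfl⟩
  have := mul_nonneg hη.1 (hℓ g 1)
  have := mul_nonneg (sub_nonneg.2 hη.2) (hℓ g (-1))
  simp only [innerRisk]; linarith

lemma le_minInnerRisk_marginLoss_half {φ : ℝ → ℝ} (hφ : ConvexOn ℝ Set.univ φ)
    {H : Set (EuclideanSpace ℝ (Fin d) → ℝ)} (hH : H.Nonempty) (x : EuclideanSpace ℝ (Fin d)) :
    φ 0 ≤ minInnerRisk (marginLoss φ) H x (1 / 2) := by
  have := hH.to_subtype
  refine le_ciInf fun f => ?_
  rw [innerRisk_half]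
  simpa [marginLoss] using hφ.map_zero_le_half_add_neg (f.1 x)

lemma not_calibrated_of_minimizer {H : Set (EuclideanSpace ℝ (Fin d) → ℝ)} {ℓ₁ ℓ₂ : Loss d}
    {x : EuclideanSpace ℝ (Fin d)} (hx : ‖x‖ ≤ 1) {η : ℝ} (hη : η ∈ Set.Icc (0 : ℝ) 1)
    {f : EuclideanSpace ℝ (Fin d) → ℝ} (hf : f ∈ H) {ε : ℝ} (hε : 0 < ε)
    (hmin : innerRisk ℓ₁ f x η ≤ minInnerRisk ℓ₁ H x η)
    (hsub : minInnerRisk ℓ₂ H x η + ε ≤ innerRisk ℓ₂ f x η) :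
    ¬ Calibrated H ℓ₁ ℓ₂ := fun hcal => by
  obtain ⟨δ, hδ, hcal⟩ := hcal ε hε η hη x hx
  exact (hcal f hf (by linarith)).not_ge hsub

section advLoss

variable {γ : ℝ} {f : EuclideanSpace ℝ (Fin d) → ℝ} {x : EuclideanSpace ℝ (Fin d)} {y : ℝ}

lemma advLoss_nonneg : 0 ≤ advLoss γ f x y :=
  Real.iSup_nonneg fun _ => by split <;> norm_num

lemma advLoss_le_one : advLoss γ f x y ≤ 1 :=
  Real.iSup_le (fun _ => by split <;> norm_num) zero_le_one

lemma one_le_advLoss (hγ : 0 ≤ γ) (hfx : y * f x ≤ 0) : 1 ≤ advLoss γ f x y := by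
  refine le_trans ?_ (le_ciSup ⟨1, ?_⟩ (⟨x, mem_closedBall_self hγ⟩ : closedBall x γ))
  · simp [hfx]
  · rintro _ ⟨_, rfl⟩
    dsimp only
    split <;> norm_num

lemma advLoss_eq_zero (h : ∀ x' ∈ closedBall x γ, 0 < y * f x') : advLoss γ f x y = 0 :=
  le_antisymm (Real.iSup_le (fun x' => by simp [(h x' x'.2).not_ge]) le_rfl) advLoss_nonneg

end advLoss

theorem stmt2_general (d : ℕ) (hd : 2 ≤ d) (γ : ℝ) (hγ0 : 0 < γ) (hγ1 : γ < 1)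
    (φ : ℝ → ℝ) (hconv : ConvexOn ℝ Set.univ φ) :
    ¬ Calibrated (Hlin d) (marginLoss φ) (advLoss γ) := by
  obtain ⟨v, w, hv, hw, hwv⟩ :=
    exists_orthogonal_unit_vectors (E := EuclideanSpace ℝ (Fin d)) (by simpa using hd)
  have hlin : ∀ u : EuclideanSpace ℝ (Fin d), ‖u‖ = 1 → (⟪u, ·⟫) ∈ Hlin d :=
    fun u hu => ⟨u, hu, rfl⟩
  refine not_calibrated_of_minimizer hv.le (η := 1 / 2) (by norm_num) (hlin w hw)
    (ε := 1 / 2) (by norm_num) ?_ ?_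
  · calc innerRisk (marginLoss φ) (⟪w, ·⟫) v (1 / 2) = φ 0 := by
          rw [innerRisk_half]; simp [marginLoss, hwv]
      _ ≤ _ := le_minInnerRisk_marginLoss_half hconv ⟨_, hlin w hw⟩ v
  · have hv_correct : advLoss γ (⟪v, ·⟫) v 1 = 0 :=
      advLoss_eq_zero fun z hz => by simpa using inner_pos_of_mem_closedBall hv hγ1 hz
    have hv_le_one : advLoss γ (⟪v, ·⟫) v (-1) ≤ 1 := advLoss_le_one
    have hw_wrong : ∀ y, 1 ≤ advLoss γ (⟪w, ·⟫) v y :=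
      fun y => one_le_advLoss hγ0.le (by simp [hwv])
    calc minInnerRisk (advLoss γ) (Hlin d) v (1 / 2) + 1 / 2
        ≤ innerRisk (advLoss γ) (⟪v, ·⟫) v (1 / 2) + 1 / 2 := by
          gcongr
          exact minInnerRisk_le_innerRisk (fun _ _ => advLoss_nonneg) (by norm_num) (hlin v hv)
      _ ≤ 1 := by rw [innerRisk_half, hv_correct]; linarith [hv_le_one]
      _ ≤ innerRisk (advLoss γ) (⟪w, ·⟫) v (1 / 2) := by
          rw [innerRisk_half]; linarith [hw_wrong 1, hw_wrong (-1)]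

theorem stmt2 (d : ℕ) (hd : 2 ≤ d) (γ : ℝ) (hγ0 : 0 < γ) (hγ1 : γ < 1)
    (φ : ℝ → ℝ) (hφ0 : ∀ t, 0 ≤ φ t) (hconv : ConvexOn ℝ Set.univ φ) :
    ¬ Calibrated (Hlin d) (marginLoss φ) (advLoss γ) :=
  stmt2_general d hd γ hγ0 hγ1 φ hconv

end
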